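/- arXiv:2303.02301 — 3 statements merged into one kernel-verified Lean document; each statement's English description precedes it below -/
import Mathlib

section
/- Let A be a unital C*-algebra, 0 < ε < 1, and 0 < δ < ε²/8. If a ∈ A satisfies ‖a‖ ≤ 2, ‖a − a*‖ ≤ δ, and ‖a − a²‖ ≤ δ, then there exists a projection p ∈ A with ‖a − p‖ < ε. -/
private lemma stmt_1_aux_low {η t : ℝ} (hη0 : 0 ≤ η) (hs1 : -η ≤ t - t ^ 2)
    (hs2 : t - t ^ 2 ≤ η) (hl : t ≤ 1 / 2) : |t| ≤ 2 * η := by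
  rw [abs_le]
  constructor
  · nlinarith [sq_nonneg t]
  · rcases le_or_gt t 0 with h0 | h0
    · linarith
    · nlinarith [mul_nonneg h0.le (by linarith : (0:ℝ) ≤ 1 / 2 - t)]

private lemma stmt_1_aux_high {η t : ℝ} (hη0 : 0 ≤ η) (hs1 : -η ≤ t - t ^ 2)
    (hs2 : t - t ^ 2 ≤ η) (hl : 1 / 2 < t) : |t - 1| ≤ 2 * η := by
  have hub : t - 1 ≤ 2 * η := by
    rcases le_or_gt t 1 with h1' | h1'
    · linarith
    · nlinarith [mul_nonneg (by linarith : (0:ℝ) ≤ t - 1) (by linarith : (0:ℝ) ≤ t - 1)]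
  have hlb : 1 - 2 * η ≤ t := by
    rcases le_or_gt 1 t with h1' | h1'
    · linarith
    · nlinarith [mul_nonneg (by linarith : (0:ℝ) ≤ 1 - t) (by linarith : (0:ℝ) ≤ t - 1/2)]
  exact abs_le.mpr ⟨by linarith, hub⟩

private lemma stmt_1_aux_final {ε δ η : ℝ} (hε0 : 0 < ε) (hε1 : ε < 1) (hδ0 : 0 < δ)
    (hδ : δ < ε ^ 2 / 8) (hδ8 : δ < 1 / 8) (hη2δ : η ≤ 3 / 2 * δ + 15 / 4 * δ ^ 2) :
    δ / 2 + 2 * η < ε := by nlinarith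


theorem stmt_1 {A : Type*} [CStarAlgebra A] {ε δ : ℝ} (hε0 : 0 < ε) (hε1 : ε < 1)
    (hδ0 : 0 < δ) (hδ : δ < ε ^ 2 / 8) (a : A) (ha : ‖a‖ ≤ 2)
    (h1 : ‖a - star a‖ ≤ δ) (h2 : ‖a - a ^ 2‖ ≤ δ) :
    ∃ p : A, IsSelfAdjoint p ∧ IsIdempotentElem p ∧ ‖a - p‖ < ε := by
  obtain hA | hA := subsingleton_or_nontrivial A
  · exact ⟨0, by simp [IsSelfAdjoint], by simp [IsIdempotentElem], by
      rw [Subsingleton.elim (a - 0) 0, norm_zero]; exact hε0⟩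
  have hδ8 : δ < 1 / 8 := by nlinarith
  set d : A := (1 / 2 : ℝ) • (star a - a) with hd_def
  set b : A := a + d with hb_def
  have hd_norm : ‖d‖ ≤ δ / 2 := by
    rw [hd_def, norm_smul, norm_sub_rev]
    simp only [Real.norm_eq_abs]
    rw [abs_of_pos (by norm_num : (0:ℝ) < 1/2)]
    linarith
  have hb : IsSelfAdjoint b := by
    rw [IsSelfAdjoint, hb_def, hd_def, star_add, star_smul, star_sub, star_star]
    simp only [star_trivial]
    module
  -- norm of 1 - 2a
  have hsa_norm : ‖star a‖ ≤ 2 := by rwa [norm_star]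
  have hstar2a : star (1 - 2 * a) = 1 - star a * 2 := by
    simp [star_sub, star_mul]
  have key1 : star (1 - 2 * a) * (1 - 2 * a)
      = (1 - 4 * (a - a ^ 2)) + (2 * (a - star a) + 4 * ((star a - a) * a)) := by
    rw [hstar2a]; noncomm_ring
  have hfour : ‖(1 : A) - 4 * (a - a ^ 2)‖ ≤ 1 + 4 * δ := by
    calc ‖(1 : A) - 4 * (a - a ^ 2)‖ ≤ ‖(1 : A)‖ + ‖4 * (a - a ^ 2)‖ := norm_sub_le _ _
      _ ≤ 1 + 4 * δ := by
        rw [norm_one]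
        have : (4 : A) * (a - a ^ 2) = (a - a^2) + (a - a^2) + (a - a^2) + (a - a^2) := by
          noncomm_ring
        rw [this]
        have := norm_add_le ((a - a^2) + (a - a^2) + (a - a^2)) (a - a^2)
        have := norm_add_le ((a - a^2) + (a - a^2)) (a - a^2)
        have := norm_add_le (a - a^2) (a - a^2)
        gcongr
        linarith [norm_add_le ((a - a^2) + (a - a^2) + (a - a^2)) (a - a^2),
          norm_add_le ((a - a^2) + (a - a^2)) (a - a^2), norm_add_le (a - a^2) (a - a^2)]
  have hmid : ‖2 * (a - star a) + 4 * ((star a - a) * a)‖ ≤ 10 * δ := by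
    have e2 : (2 : A) * (a - star a) = (a - star a) + (a - star a) := by noncomm_ring
    have e4 : (4 : A) * ((star a - a) * a) = ((star a - a) * a) + ((star a - a) * a)
        + ((star a - a) * a) + ((star a - a) * a) := by noncomm_ring
    have hsub : ‖star a - a‖ ≤ δ := by rwa [norm_sub_rev]
    have hprod : ‖(star a - a) * a‖ ≤ δ * 2 :=
      (norm_mul_le _ _).trans (mul_le_mul hsub ha (norm_nonneg _) hδ0.le)
    calc ‖2 * (a - star a) + 4 * ((star a - a) * a)‖
        ≤ ‖(2:A) * (a - star a)‖ + ‖(4:A) * ((star a - a) * a)‖ := norm_add_le _ _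
      _ ≤ 10 * δ := by
        rw [e2, e4]
        have g1 := norm_add_le (a - star a) (a - star a)
        have g2 := norm_add_le (((star a - a) * a) + ((star a - a) * a) + ((star a - a) * a))
          ((star a - a) * a)
        have g3 := norm_add_le (((star a - a) * a) + ((star a - a) * a)) ((star a - a) * a)
        have g4 := norm_add_le ((star a - a) * a) ((star a - a) * a)
        linarith
  have h2a : ‖1 - 2 * a‖ ≤ 1 + 7 * δ := by
    have hsq : ‖1 - 2 * a‖ * ‖1 - 2 * a‖ ≤ 1 + 14 * δ := by
      rw [← CStarRing.norm_star_mul_self, key1]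
      calc ‖(1 - 4 * (a - a ^ 2)) + (2 * (a - star a) + 4 * ((star a - a) * a))‖
          ≤ ‖(1:A) - 4 * (a - a ^ 2)‖ + ‖2 * (a - star a) + 4 * ((star a - a) * a)‖ :=
            norm_add_le _ _
        _ ≤ 1 + 14 * δ := by linarith
    nlinarith [norm_nonneg (1 - 2 * a), hδ0]
  -- norm of b - b²
  have id1 : b - b ^ 2 = (a - a ^ 2) + (d - (a * d + d * a + d * d)) := by
    rw [hb_def]; noncomm_ring
  have id2 : (d - (a * d + d * a + d * d)) + (d - (a * d + d * a + d * d))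
      = (1 - 2 * a - d) * d + d * (1 - 2 * a - d) := by noncomm_ring
  have hX : ‖d - (a * d + d * a + d * d)‖ ≤ (1 + 7 * δ + δ / 2) * (δ / 2) := by
    have h2X : ‖(d - (a * d + d * a + d * d)) + (d - (a * d + d * a + d * d))‖
        = 2 * ‖d - (a * d + d * a + d * d)‖ := by
      rw [← two_smul ℝ, norm_smul]; simp
    have hbnd : ‖1 - 2 * a - d‖ ≤ 1 + 7 * δ + δ / 2 :=
      (norm_sub_le _ _).trans (by linarith)
    have hsum : ‖(1 - 2 * a - d) * d + d * (1 - 2 * a - d)‖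
        ≤ 2 * ((1 + 7 * δ + δ / 2) * (δ / 2)) := by
      calc ‖(1 - 2 * a - d) * d + d * (1 - 2 * a - d)‖
          ≤ ‖(1 - 2 * a - d) * d‖ + ‖d * (1 - 2 * a - d)‖ := norm_add_le _ _
        _ ≤ ‖1 - 2 * a - d‖ * ‖d‖ + ‖d‖ * ‖1 - 2 * a - d‖ :=
            add_le_add (norm_mul_le _ _) (norm_mul_le _ _)
        _ ≤ 2 * ((1 + 7 * δ + δ / 2) * (δ / 2)) := by
            nlinarith [norm_nonneg (1 - 2 * a - d), norm_nonneg d]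
    rw [← id2, h2X] at hsum
    linarith
  have hbb : ‖b - b ^ 2‖ ≤ 3 / 2 * δ + 15 / 4 * δ ^ 2 := by
    rw [id1]
    calc ‖(a - a ^ 2) + (d - (a * d + d * a + d * d))‖
        ≤ ‖a - a ^ 2‖ + ‖d - (a * d + d * a + d * d)‖ := norm_add_le _ _
      _ ≤ δ + (1 + 7 * δ + δ / 2) * (δ / 2) := add_le_add h2 hX
      _ = 3 / 2 * δ + 15 / 4 * δ ^ 2 := by ring
  have hab : ‖a - b‖ ≤ δ / 2 := by
    rw [hb_def]; simpa using hd_norm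
  set η : ℝ := ‖b - b ^ 2‖ with hη_def
  have hη0 : 0 ≤ η := norm_nonneg _
  clear_value b d η
  have hη4 : η < 1 / 4 := by nlinarith
  have hη2δ : η ≤ 3 / 2 * δ + 15 / 4 * δ ^ 2 := hbb
  -- spectral bound
  have hcfc : b - b ^ 2 = cfc (fun t : ℝ => t - t ^ 2) b := by
    rw [cfc_sub (fun t : ℝ => t) (fun t : ℝ => t ^ 2) b (by fun_prop) (by fun_prop),
      cfc_id' ℝ b, cfc_pow_id b 2]
  have spec_bound : ∀ t ∈ spectrum ℝ b, |t - t ^ 2| ≤ η := by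
    intro t ht
    have hmem : t - t ^ 2 ∈ spectrum ℝ (b - b ^ 2) := by
      rw [hcfc, cfc_map_spectrum (fun t : ℝ => t - t ^ 2) b hb (by fun_prop)]
      exact ⟨t, ht, rfl⟩
    rw [hη_def]
    simpa [Real.norm_eq_abs] using spectrum.norm_le_norm_of_mem hmem
  have hden : (0 : ℝ) < 1 - 4 * η := by linarith
  set g : ℝ → ℝ := fun t => min 1 (max 0 ((t - 2 * η) / (1 - 4 * η))) with hg_def
  have hgc : Continuous g := by fun_prop
  have hdich : ∀ t ∈ spectrum ℝ b, (g t = 0 ∧ |t| ≤ 2 * η) ∨ (g t = 1 ∧ |t - 1| ≤ 2 * η) := by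
    intro t ht
    have hs := spec_bound t ht
    rw [abs_le] at hs
    obtain ⟨hs1, hs2⟩ := hs
    rcases le_or_gt t (1 / 2) with hl | hl
    · left
      have ht2 : |t| ≤ 2 * η := stmt_1_aux_low hη0 hs1 hs2 hl
      refine ⟨?_, ht2⟩
      have htle : t ≤ 2 * η := (abs_le.mp ht2).2
      have hdiv : (t - 2 * η) / (1 - 4 * η) ≤ 0 :=
        div_nonpos_of_nonpos_of_nonneg (by linarith) hden.le
      simp only [hg_def]
      rw [max_eq_left hdiv, min_eq_right (by norm_num : (0:ℝ) ≤ 1)]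
    · right
      have habs : |t - 1| ≤ 2 * η := stmt_1_aux_high hη0 hs1 hs2 hl
      have hlb : 1 - 2 * η ≤ t := by
        have := (abs_le.mp habs).1; linarith
      refine ⟨?_, habs⟩
      have hone : 1 ≤ (t - 2 * η) / (1 - 4 * η) := (one_le_div hden).mpr (by linarith)
      simp only [hg_def]
      rw [max_eq_right (by linarith : (0:ℝ) ≤ (t - 2 * η) / (1 - 4 * η)), min_eq_left hone]
  refine ⟨cfc g b, cfc_predicate g b, ?_, ?_⟩
  · show cfc g b * cfc g b = cfc g b
    rw [← cfc_mul g g b hgc.continuousOn hgc.continuousOn]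
    refine cfc_congr fun t ht => ?_
    rcases hdich t ht with ⟨h0, -⟩ | ⟨h1', -⟩
    · simp [h0]
    · simp [h1']
  · have hbp : b - cfc g b = cfc (fun t : ℝ => t - g t) b := by
      have := cfc_sub (fun t : ℝ => t) g b (by fun_prop) hgc.continuousOn
      rw [cfc_id' ℝ b hb] at this
      exact this.symm
    have hnorm : ‖b - cfc g b‖ ≤ 2 * η := by
      rw [hbp]
      refine norm_cfc_le (by positivity) fun t ht => ?_
      rcases hdich t ht with ⟨h0, habs⟩ | ⟨h1', habs⟩
      · rw [h0]; simpa [Real.norm_eq_abs] using habs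
      · rw [h1']; simpa [Real.norm_eq_abs] using habs
    have hsplit : a - cfc g b = (a - b) + (b - cfc g b) := by abel
    calc ‖a - cfc g b‖ ≤ ‖a - b‖ + ‖b - cfc g b‖ := by rw [hsplit]; exact norm_add_le _ _
      _ ≤ δ / 2 + 2 * η := add_le_add hab hnorm
      _ < ε := stmt_1_aux_final hε0 hε1 hδ0 hδ hδ8 hη2δ
end

section
/- Let A be a C*-algebra, a ∈ A, and p₁, p₂ ∈ A projections with ‖a*a − p₁‖ ≤ δ and ‖aa* − p₂‖ ≤ δ. Then ‖a(1 − p₁)‖² ≤ δ and ‖(1 − p₂)a‖² ≤ δ, and consequently ‖a − p₂ a p₁‖ ≤ 2√δ. -/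
lemma proj_norm_le_one {A : Type*} [CStarAlgebra A] {p : A}
    (hp : IsSelfAdjoint p) (hp' : IsIdempotentElem p) : ‖p‖ ≤ 1 := by
  have h : ‖p‖ * ‖p‖ = ‖p‖ := by
    rw [← CStarRing.norm_star_mul_self, hp.star_eq, hp']
  nlinarith [norm_nonneg p]

theorem stmt_5 {A : Type*} [CStarAlgebra A] {δ : ℝ} (hδ : 0 < δ) (a p₁ p₂ : A)
    (hp₁ : IsSelfAdjoint p₁) (hp₁' : IsIdempotentElem p₁)
    (hp₂ : IsSelfAdjoint p₂) (hp₂' : IsIdempotentElem p₂)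
    (h1 : ‖star a * a - p₁‖ ≤ δ) (h2 : ‖a * star a - p₂‖ ≤ δ) :
    ‖a * (1 - p₁)‖ ^ 2 ≤ δ ∧ ‖(1 - p₂) * a‖ ^ 2 ≤ δ ∧
      ‖a - p₂ * a * p₁‖ ≤ 2 * Real.sqrt δ := by
  have hq₁ : ‖(1 : A) - p₁‖ ≤ 1 :=
    proj_norm_le_one ((IsSelfAdjoint.one A).sub hp₁) hp₁'.one_sub
  have hq₂ : ‖(1 : A) - p₂‖ ≤ 1 :=
    proj_norm_le_one ((IsSelfAdjoint.one A).sub hp₂) hp₂'.one_sub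
  have h01 : ((1 : A) - p₁) * p₁ = 0 := by
    rw [sub_mul, one_mul, hp₁'.eq, sub_self]
  have h02 : ((1 : A) - p₂) * p₂ = 0 := by
    rw [sub_mul, one_mul, hp₂'.eq, sub_self]
  have key1 : ‖a * (1 - p₁)‖ ^ 2 ≤ δ := by
    have e : star (a * (1 - p₁)) * (a * (1 - p₁)) =
        (1 - p₁) * (star a * a - p₁) * (1 - p₁) := by
      rw [show ((1:A) - p₁) * (star a * a - p₁) = (1 - p₁) * (star a * a) by
        rw [mul_sub, h01, sub_zero]]
      rw [star_mul, star_sub, star_one, hp₁.star_eq]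
      noncomm_ring
    calc ‖a * (1 - p₁)‖ ^ 2 = ‖star (a * (1 - p₁)) * (a * (1 - p₁))‖ := by
          rw [CStarRing.norm_star_mul_self, sq]
      _ = ‖(1 - p₁) * (star a * a - p₁) * (1 - p₁)‖ := by rw [e]
      _ ≤ ‖(1 - p₁) * (star a * a - p₁)‖ * ‖(1:A) - p₁‖ := norm_mul_le _ _
      _ ≤ ‖(1:A) - p₁‖ * ‖star a * a - p₁‖ * ‖(1:A) - p₁‖ := by
          gcongr; exact norm_mul_le _ _
      _ ≤ 1 * δ * 1 := by gcongr
      _ = δ := by ring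
  have key2 : ‖(1 - p₂) * a‖ ^ 2 ≤ δ := by
    have e : ((1 - p₂) * a) * star ((1 - p₂) * a) =
        (1 - p₂) * (a * star a - p₂) * (1 - p₂) := by
      rw [show ((1:A) - p₂) * (a * star a - p₂) = (1 - p₂) * (a * star a) by
        rw [mul_sub, h02, sub_zero]]
      rw [star_mul, star_sub, star_one, hp₂.star_eq]
      noncomm_ring
    calc ‖(1 - p₂) * a‖ ^ 2 = ‖((1 - p₂) * a) * star ((1 - p₂) * a)‖ := by
          rw [CStarRing.norm_self_mul_star, sq]
      _ = ‖(1 - p₂) * (a * star a - p₂) * (1 - p₂)‖ := by rw [e]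
      _ ≤ ‖(1 - p₂) * (a * star a - p₂)‖ * ‖(1:A) - p₂‖ := norm_mul_le _ _
      _ ≤ ‖(1:A) - p₂‖ * ‖a * star a - p₂‖ * ‖(1:A) - p₂‖ := by
          gcongr; exact norm_mul_le _ _
      _ ≤ 1 * δ * 1 := by gcongr
      _ = δ := by ring
  refine ⟨key1, key2, ?_⟩
  have hs : Real.sqrt δ ^ 2 = δ := Real.sq_sqrt hδ.le
  have hb1 : ‖a * (1 - p₁)‖ ≤ Real.sqrt δ := by
    nlinarith [Real.sqrt_nonneg δ, norm_nonneg (a * (1 - p₁))]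
  have hb2 : ‖(1 - p₂) * a‖ ≤ Real.sqrt δ := by
    nlinarith [Real.sqrt_nonneg δ, norm_nonneg ((1 - p₂) * a)]
  have hp2n : ‖p₂‖ ≤ 1 := proj_norm_le_one hp₂ hp₂'
  have e : a - p₂ * a * p₁ = (1 - p₂) * a + p₂ * (a * (1 - p₁)) := by noncomm_ring
  calc ‖a - p₂ * a * p₁‖ = ‖(1 - p₂) * a + p₂ * (a * (1 - p₁))‖ := by rw [e]
    _ ≤ ‖(1 - p₂) * a‖ + ‖p₂ * (a * (1 - p₁))‖ := norm_add_le _ _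
    _ ≤ ‖(1 - p₂) * a‖ + ‖p₂‖ * ‖a * (1 - p₁)‖ := by gcongr; exact norm_mul_le _ _
    _ ≤ 2 * Real.sqrt δ := by nlinarith [norm_nonneg (a * (1 - p₁)), norm_nonneg p₂, Real.sqrt_nonneg δ]
end

section
/- Let A be a unital C*-algebra, 0 < ε < 1, and 0 < δ < 2⁻¹⁶ ε⁸. Suppose a ∈ A and p₁, p₂ ∈ A are projections with ‖a*a − p₁‖ ≤ δ and ‖aa* − p₂‖ ≤ δ. Then there exists a partial isometry v ∈ A with ‖a − v‖ < ε, v*v = p₁, and vv* = p₂. -/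
/-!
Compress `a` to `x := p₂ * a * p₁`. Since `1 - p₂` is a projection,
`‖(1 - p₂) * a‖ ^ 2 ≤ ‖a * star a - p₂‖`, so `x` is within `2 √δ` of `a` and
`‖star x * x - p₁‖ ≤ 2 δ`. Hence the spectrum of `star x * x` lies near `{0, 1}`, and
`v := x * g (star x * x)`, with `g` continuous, equal to `t ^ (-1/2)` near `1` and to `0` near `0`,
stays within `2 √δ` of `x`. Both `star v * v` and `v * star v` are projections, lying below `p₁`
and `p₂` respectively and at distance `< 1` from them; a projection below another one at distance
`< 1` equals it.
-/

lemma abs_le_or_abs_sub_one_le_of_abs_sq_sub_le {t μ : ℝ} (hμ : μ < 3 / 16)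
    (h : |t ^ 2 - t| ≤ μ) : |t| ≤ 4 / 3 * μ ∨ |t - 1| ≤ 4 / 3 * μ := by
  have h_factor : |t ^ 2 - t| = |t| * |t - 1| := by rw [← abs_mul]; ring_nf
  rcases le_or_gt t (1 / 4) with ht | ht
  · left
    have : 3 / 4 ≤ |t - 1| := by rw [abs_sub_comm]; exact le_abs.mpr (Or.inl (by linarith))
    nlinarith [abs_nonneg t]
  rcases le_or_gt (3 / 4) t with ht' | ht'
  · right
    have : 3 / 4 ≤ |t| := le_abs.mpr (Or.inl ht')
    nlinarith [abs_nonneg (t - 1)]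
  · have : 3 / 16 < t * (1 - t) := by nlinarith
    have : |t ^ 2 - t| = t * (1 - t) := by
      rw [abs_of_nonpos (by nlinarith)]; ring
    linarith

noncomputable def invSqrtCutoff (t : ℝ) : ℝ :=
  min (max (4 * t - 1) 0) 1 * (√(max t 2⁻¹))⁻¹

@[fun_prop]
lemma continuous_invSqrtCutoff : Continuous invSqrtCutoff := by
  refine .mul (by fun_prop) (.inv₀ (by fun_prop) fun t ↦ ?_)
  exact (Real.sqrt_pos.mpr (lt_max_of_lt_right (by norm_num))).ne'

lemma invSqrtCutoff_of_le {t : ℝ} (ht : t ≤ 1 / 4) : invSqrtCutoff t = 0 := by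
  simp [invSqrtCutoff, max_eq_right (by linarith : 4 * t - 1 ≤ 0)]

lemma invSqrtCutoff_of_ge {t : ℝ} (ht : 1 / 2 ≤ t) : invSqrtCutoff t = (√t)⁻¹ := by
  rw [invSqrtCutoff, min_eq_right (le_max_of_le_left (by linarith)), max_eq_left (by linarith),
    one_mul]

lemma invSqrtCutoff_mul_mul_self_of_ge {t : ℝ} (ht : 1 / 2 ≤ t) :
    invSqrtCutoff t * t * invSqrtCutoff t = 1 := by
  have : √t ≠ 0 := (Real.sqrt_pos.mpr (by linarith)).ne'
  rw [invSqrtCutoff_of_ge ht]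
  field_simp
  exact (Real.sq_sqrt (by linarith)).symm

lemma one_sub_invSqrtCutoff_mul_mul_self_le {t : ℝ} (ht : 1 / 2 ≤ t) :
    |(1 - invSqrtCutoff t) * t * (1 - invSqrtCutoff t)| ≤ (t - 1) ^ 2 := by
  have hs : 0 < √t := Real.sqrt_pos.mpr (by linarith)
  have h_eq : (1 - invSqrtCutoff t) * t * (1 - invSqrtCutoff t) = (√t - 1) ^ 2 := by
    rw [invSqrtCutoff_of_ge ht]
    field_simp
    rw [Real.sq_sqrt (by linarith)]
    ring
  have h_sq : √t ^ 2 = t := Real.sq_sqrt (by linarith)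
  have h_factor : (t - 1) ^ 2 = (√t - 1) ^ 2 * (√t + 1) ^ 2 := by
    linear_combination (2 - t - √t ^ 2) * h_sq
  rw [h_eq, abs_of_nonneg (sq_nonneg _), h_factor]
  nlinarith [sq_nonneg (√t - 1)]

section StarProjection

variable {A : Type*} [NonUnitalNormedRing A] [StarRing A] [CStarRing A] {p q v : A}

lemma IsStarProjection.eq_zero_of_norm_lt_one (hp : IsStarProjection p) (h : ‖p‖ < 1) :
    p = 0 := by
  have h_sq : ‖p‖ * ‖p‖ = ‖p‖ := by
    rw [← CStarRing.norm_star_mul_self, hp.isSelfAdjoint.star_eq, hp.isIdempotentElem.eq]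
  exact norm_eq_zero.mp (by nlinarith [norm_nonneg p])

lemma IsStarProjection.eq_of_mul_eq_of_norm_sub_lt_one (hp : IsStarProjection p)
    (hq : IsStarProjection q) (hqp : q * p = p) (h : ‖q - p‖ < 1) : p = q :=
  (sub_eq_zero.mp ((hp.sub_of_mul_eq_right hq hqp).eq_zero_of_norm_lt_one h)).symm

lemma IsStarProjection.norm_mul_mul_self_le (hp : IsStarProjection p) (a : A) :
    ‖p * a * p‖ ≤ ‖a‖ := by
  have := hp.norm_le
  calc ‖p * a * p‖ ≤ ‖p‖ * ‖a‖ * ‖p‖ := norm_mul₃_le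
    _ ≤ 1 * ‖a‖ * 1 := by gcongr
    _ = ‖a‖ := by ring

lemma norm_le_one_of_isStarProjection_star_mul_self (hv : IsStarProjection (star v * v)) :
    ‖v‖ ≤ 1 := by
  have h := hv.norm_le
  rw [CStarRing.norm_star_mul_self] at h
  nlinarith [norm_nonneg v]

end StarProjection

lemma norm_mul_star_sub_mul_star_le {A : Type*} [NonUnitalNormedRing A] [StarRing A]
    [NormedStarGroup A] (a v : A) :
    ‖a * star a - v * star v‖ ≤ (‖a‖ + ‖v‖) * ‖a - v‖ := by
  have h_eq : a * star a - v * star v = a * star (a - v) + (a - v) * star v := by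
    rw [star_sub]; noncomm_ring
  calc ‖a * star a - v * star v‖ ≤ ‖a‖ * ‖star (a - v)‖ + ‖a - v‖ * ‖star v‖ :=
        h_eq ▸ (norm_add_le _ _).trans (add_le_add (norm_mul_le _ _) (norm_mul_le _ _))
    _ = (‖a‖ + ‖v‖) * ‖a - v‖ := by rw [norm_star, norm_star]; ring

section Compression

variable {A : Type*} [NormedRing A] [StarRing A] [CStarRing A] {p p₁ p₂ : A}

lemma IsStarProjection.norm_one_sub_mul_sq_le (hp : IsStarProjection p) (a : A) :
    ‖(1 - p) * a‖ ^ 2 ≤ ‖a * star a - p‖ := by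
  have hq := hp.one_sub
  have h_eq : (1 - p) * (a * star a - p) * (1 - p) = (1 - p) * a * star ((1 - p) * a) := by
    rw [star_mul, hq.isSelfAdjoint.star_eq, mul_sub (1 - p), hp.one_sub_mul_self, sub_zero]
    simp only [mul_assoc]
  calc ‖(1 - p) * a‖ ^ 2 = ‖(1 - p) * (a * star a - p) * (1 - p)‖ := by
        rw [h_eq, CStarRing.norm_self_mul_star, sq]
    _ ≤ ‖a * star a - p‖ := hq.norm_mul_mul_self_le _

lemma IsStarProjection.norm_mul_one_sub_sq_le (hp : IsStarProjection p) (a : A) :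
    ‖a * (1 - p)‖ ^ 2 ≤ ‖star a * a - p‖ := by
  simpa [← norm_star (a * (1 - p)), star_mul, hp.one_sub.isSelfAdjoint.star_eq] using
    hp.norm_one_sub_mul_sq_le (star a)

lemma norm_sub_mul_mul_le (hp : IsStarProjection p) (a q : A) :
    ‖a - p * a * q‖ ≤ ‖(1 - p) * a‖ + ‖a * (1 - q)‖ := by
  have h_eq : a - p * a * q = (1 - p) * a + p * (a * (1 - q)) := by noncomm_ring
  calc ‖a - p * a * q‖ ≤ ‖(1 - p) * a‖ + ‖p * (a * (1 - q))‖ := h_eq ▸ norm_add_le _ _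
    _ ≤ ‖(1 - p) * a‖ + 1 * ‖a * (1 - q)‖ := by
        gcongr; exact (norm_mul_le _ _).trans (by gcongr; exact hp.norm_le)
    _ = _ := by ring

lemma norm_star_mul_self_mul_mul_sub_le (hp₁ : IsStarProjection p₁) (hp₂ : IsStarProjection p₂)
    (a : A) :
    ‖star (p₂ * a * p₁) * (p₂ * a * p₁) - p₁‖ ≤ ‖star a * a - p₁‖ + ‖a * star a - p₂‖ := by
  have h_eq : star (p₂ * a * p₁) * (p₂ * a * p₁) - p₁ =
      p₁ * (star a * a - p₁) * p₁ - p₁ * (star ((1 - p₂) * a) * ((1 - p₂) * a)) * p₁ := by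
    have h₂ : ∀ z, p₂ * (p₂ * z) = p₂ * z := fun z ↦ by rw [← mul_assoc, hp₂.isIdempotentElem.eq]
    simp only [star_mul, hp₁.isSelfAdjoint.star_eq, hp₂.isSelfAdjoint.star_eq, star_sub,
      mul_sub, sub_mul, one_mul, mul_assoc, h₂, hp₁.isIdempotentElem.eq]
    abel
  rw [h_eq]
  refine (norm_sub_le _ _).trans (add_le_add (hp₁.norm_mul_mul_self_le _) ?_)
  refine (hp₁.norm_mul_mul_self_le _).trans ?_
  rw [CStarRing.norm_star_mul_self, ← sq]
  exact hp₂.norm_one_sub_mul_sq_le a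

end Compression

lemma IsStarProjection.mul_star_mul_self_of_mul_eq {R : Type*} [Semigroup R] [StarMul R]
    {p x : R} (hp : IsStarProjection p) (hxp : x * p = x) :
    p * (star x * x) = star x * x := by
  have hpx : p * star x = star x := by
    simpa [star_mul, hp.isSelfAdjoint.star_eq] using congr(star $hxp)
  rw [← mul_assoc, hpx]

open Polynomial in
lemma abs_le_or_abs_sub_one_le_of_mem_spectrum {A : Type*} [NormedRing A] [NormedAlgebra ℝ A]
    [CompleteSpace A] [NormOneClass A] {b p : A} (hp : IsIdempotentElem p) (hpb : p * b = b)
    (hbp : b * p = b) {η : ℝ} (hη : η ≤ 1 / 8) (h : ‖b - p‖ ≤ η) {t : ℝ}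
    (ht : t ∈ spectrum ℝ b) : |t| ≤ 3 / 2 * η ∨ |t - 1| ≤ 3 / 2 * η := by
  have h_eq : b ^ 2 - b = (b - p) * (b - p) + (b - p) := by
    simp only [sq, mul_sub, sub_mul, hpb, hbp, hp.eq]
    abel
  have h_norm : ‖b ^ 2 - b‖ ≤ 9 / 8 * η := by
    have := norm_nonneg (b - p)
    have : 0 ≤ η := this.trans h
    calc ‖b ^ 2 - b‖ ≤ ‖b - p‖ * ‖b - p‖ + ‖b - p‖ :=
          h_eq ▸ (norm_add_le _ _).trans (by gcongr; exact norm_mul_le _ _)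
      _ ≤ η * η + η := by gcongr
      _ ≤ 9 / 8 * η := by nlinarith
  have h_mem : t ^ 2 - t ∈ spectrum ℝ (b ^ 2 - b) := by
    have := spectrum.subset_polynomial_aeval b (X ^ 2 - X : ℝ[X]) ⟨t, ht, rfl⟩
    simpa only [eval_sub, eval_pow, eval_X, map_sub, map_pow, aeval_X] using this
  have h_abs : |t ^ 2 - t| ≤ 9 / 8 * η := (spectrum.norm_le_norm_of_mem h_mem).trans h_norm
  convert abs_le_or_abs_sub_one_le_of_abs_sq_sub_le (by linarith) h_abs using 2 <;> ring

section CStarAlgebra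

variable {A : Type*} [CStarAlgebra A] {a x p p₁ p₂ v : A} {η : ℝ}

lemma star_mul_self_mul_cfc (x : A) (f : ℝ → ℝ)
    (hf : ContinuousOn f (spectrum ℝ (star x * x)) := by cfc_cont_tac) :
    star (x * cfc f (star x * x)) * (x * cfc f (star x * x)) =
      cfc (fun t ↦ f t * t * f t) (star x * x) := by
  rw [cfc_mul (fun t ↦ f t * t) f (star x * x), cfc_mul f (fun t ↦ t) (star x * x),
    cfc_id' ℝ (star x * x), star_mul, (cfc_predicate f (star x * x)).star_eq]
  simp only [mul_assoc]

lemma abs_le_or_abs_sub_one_le_of_mem_spectrum_star_mul_self (hp : IsStarProjection p)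
    (hxp : x * p = x) (hη : η ≤ 1 / 8) (h : ‖star x * x - p‖ ≤ η) {t : ℝ}
    (ht : t ∈ spectrum ℝ (star x * x)) : |t| ≤ 3 / 2 * η ∨ |t - 1| ≤ 3 / 2 * η := by
  rcases subsingleton_or_nontrivial A with _ | _
  · simp [spectrum.of_subsingleton] at ht
  exact abs_le_or_abs_sub_one_le_of_mem_spectrum hp.isIdempotentElem
    (hp.mul_star_mul_self_of_mul_eq hxp) (by rw [mul_assoc, hxp]) hη h ht

lemma star_mul_self_mul_cfc_invSqrtCutoff (hp : IsStarProjection p) (hxp : x * p = x)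
    (hη : η ≤ 1 / 8) (h : ‖star x * x - p‖ ≤ η) :
    star (x * cfc invSqrtCutoff (star x * x)) * (x * cfc invSqrtCutoff (star x * x)) = p := by
  set b := star x * x
  have h_values : ∀ t ∈ spectrum ℝ b,
      (invSqrtCutoff t * t * invSqrtCutoff t = 0 ∧ |t| ≤ 3 / 2 * η) ∨
        (invSqrtCutoff t * t * invSqrtCutoff t = 1 ∧ |t - 1| ≤ 3 / 2 * η) := by
    intro t ht
    rcases abs_le_or_abs_sub_one_le_of_mem_spectrum_star_mul_self hp hxp hη h ht with ht' | ht'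
    · left
      rw [invSqrtCutoff_of_le (by linarith [le_abs_self t]), zero_mul, zero_mul]
      exact ⟨rfl, ht'⟩
    · exact .inr ⟨invSqrtCutoff_mul_mul_self_of_ge (by linarith [neg_abs_le (t - 1)]), ht'⟩
  set q := cfc (fun t ↦ invSqrtCutoff t * t * invSqrtCutoff t) b
  have hq : IsStarProjection q := by
    refine isStarProjection_iff_spectrum_subset_and_isSelfAdjoint.mpr ⟨?_, cfc_predicate _ _⟩
    rw [cfc_map_spectrum _ b]
    rintro _ ⟨t, ht, rfl⟩
    rcases h_values t ht with ⟨h_val, -⟩ | ⟨h_val, -⟩ <;> simp [h_val]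
  have hpq : p * q = q := by
    have hpb : p * b = b := hp.mul_star_mul_self_of_mul_eq hxp
    have h_eq : q = b * cfc (fun t ↦ invSqrtCutoff t * invSqrtCutoff t) b :=
      calc q = cfc (fun t ↦ t * (invSqrtCutoff t * invSqrtCutoff t)) b := by
            simp only [q, mul_comm, mul_left_comm]
        _ = cfc (fun t ↦ t) b * cfc (fun t ↦ invSqrtCutoff t * invSqrtCutoff t) b :=
            cfc_mul _ _ b
        _ = _ := by rw [cfc_id' ℝ b]
    rw [h_eq, ← mul_assoc, hpb]
  have h_dist : ‖b - q‖ ≤ 3 / 2 * η := by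
    have h_eq : b - q = cfc (fun t ↦ t - invSqrtCutoff t * t * invSqrtCutoff t) b := by
      rw [cfc_sub (fun t ↦ t) _ b, cfc_id' ℝ b]
    rw [h_eq]
    refine norm_cfc_le (by linarith [(norm_nonneg _).trans h]) fun t ht ↦ ?_
    rcases h_values t ht with ⟨h_val, ht'⟩ | ⟨h_val, ht'⟩
    · simpa [h_val] using ht'
    · simpa [h_val, abs_sub_comm] using ht'
  rw [star_mul_self_mul_cfc x invSqrtCutoff]
  refine hq.eq_of_mul_eq_of_norm_sub_lt_one hp hpq ?_
  calc ‖p - q‖ ≤ ‖b - p‖ + ‖b - q‖ := by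
        rw [norm_sub_rev b p]; exact norm_sub_le_norm_sub_add_norm_sub _ _ _
    _ < 1 := by linarith

lemma norm_sub_mul_cfc_invSqrtCutoff_sq_le (hp : IsStarProjection p) (hxp : x * p = x)
    (hη : η ≤ 1 / 8) (h : ‖star x * x - p‖ ≤ η) :
    ‖x - x * cfc invSqrtCutoff (star x * x)‖ ^ 2 ≤ 2 * η := by
  have hη0 : 0 ≤ η := (norm_nonneg _).trans h
  have h_eq : x - x * cfc invSqrtCutoff (star x * x) =
      x * cfc (fun t ↦ 1 - invSqrtCutoff t) (star x * x) := by
    rw [cfc_sub (fun _ ↦ 1) _ (star x * x), cfc_const_one ℝ (star x * x), mul_sub, mul_one]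
  rw [h_eq, sq, ← CStarRing.norm_star_mul_self,
    star_mul_self_mul_cfc x (fun t ↦ 1 - invSqrtCutoff t)]
  refine norm_cfc_le (by linarith) fun t ht ↦ ?_
  rcases abs_le_or_abs_sub_one_le_of_mem_spectrum_star_mul_self hp hxp hη h ht with ht' | ht'
  · rw [invSqrtCutoff_of_le (by linarith [le_abs_self t]), sub_zero, one_mul, mul_one,
      Real.norm_eq_abs]
    linarith
  · have ht_ge : 1 / 2 ≤ t := by linarith [neg_abs_le (t - 1)]
    have h_sq : (t - 1) ^ 2 ≤ (3 / 2 * η) ^ 2 := sq_le_sq' (abs_le.mp ht').1 (abs_le.mp ht').2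
    rw [Real.norm_eq_abs]
    nlinarith [one_sub_invSqrtCutoff_mul_mul_self_le ht_ge]

lemma IsStarProjection.mul_star_self_of_star_mul_self (hv : IsStarProjection (star v * v)) :
    IsStarProjection (v * star v) :=
  ⟨isIdempotentElem_star_mul_self_iff_isIdempotentElem_self_mul_star.mp hv.isIdempotentElem,
    .mul_star_self v⟩

theorem exists_norm_sub_sq_le_and_star_mul_self_eq (hp₁ : IsStarProjection p₁)
    (hp₂ : IsStarProjection p₂) {δ : ℝ} (hδ : δ ≤ 1 / 16) (h₁ : ‖star a * a - p₁‖ ≤ δ)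
    (h₂ : ‖a * star a - p₂‖ ≤ δ) :
    ∃ v : A, ‖a - v‖ ^ 2 ≤ 16 * δ ∧ star v * v = p₁ ∧ p₂ * v = v := by
  set x := p₂ * a * p₁
  have hxp : x * p₁ = x := by simp only [x, mul_assoc, hp₁.isIdempotentElem.eq]
  have hx : ‖star x * x - p₁‖ ≤ 2 * δ :=
    (norm_star_mul_self_mul_mul_sub_le hp₁ hp₂ a).trans (by linarith)
  refine ⟨x * cfc invSqrtCutoff (star x * x), ?_,
    star_mul_self_mul_cfc_invSqrtCutoff hp₁ hxp (by linarith) hx,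
    by simp only [x, ← mul_assoc, hp₂.isIdempotentElem.eq]⟩
  set s := √δ
  have hs : s ^ 2 = δ := Real.sq_sqrt ((norm_nonneg _).trans h₁)
  have n₁ : ‖(1 - p₂) * a‖ ≤ s := Real.le_sqrt_of_sq_le ((hp₂.norm_one_sub_mul_sq_le a).trans h₂)
  have n₂ : ‖a * (1 - p₁)‖ ≤ s := Real.le_sqrt_of_sq_le ((hp₁.norm_mul_one_sub_sq_le a).trans h₁)
  have n₃ : ‖x - x * cfc invSqrtCutoff (star x * x)‖ ≤ 2 * s := by
    nlinarith [norm_sub_mul_cfc_invSqrtCutoff_sq_le hp₁ hxp (by linarith) hx, Real.sqrt_nonneg δ,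
      norm_nonneg (x - x * cfc invSqrtCutoff (star x * x))]
  calc ‖a - x * cfc invSqrtCutoff (star x * x)‖ ^ 2 ≤ (4 * s) ^ 2 := by
        gcongr
        linarith [norm_sub_le_norm_sub_add_norm_sub a x (x * cfc invSqrtCutoff (star x * x)),
          norm_sub_mul_mul_le hp₂ a p₁]
    _ = 16 * δ := by rw [mul_pow, hs]; norm_num

end CStarAlgebra

theorem stmt_6_general {A : Type*} [CStarAlgebra A] {ε δ : ℝ} (hε0 : 0 < ε) (hε1 : ε < 1)
    (hδ : δ < 2 ^ (-16 : ℤ) * ε ^ 8) (a p₁ p₂ : A)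
    (hp₁ : IsSelfAdjoint p₁) (hp₁' : IsIdempotentElem p₁)
    (hp₂ : IsSelfAdjoint p₂) (hp₂' : IsIdempotentElem p₂)
    (h1 : ‖star a * a - p₁‖ ≤ δ) (h2 : ‖a * star a - p₂‖ ≤ δ) :
    ∃ v : A, ‖a - v‖ < ε ∧ star v * v = p₁ ∧ v * star v = p₂ := by
  have hδε : 16 * δ < ε ^ 2 ∧ δ < 1 / 65536 := by
    have : ε ^ 8 ≤ ε ^ 2 := pow_le_pow_of_le_one hε0.le hε1.le (by norm_num)
    have : ε ^ 2 < 1 := pow_lt_one₀ hε0.le hε1 (by norm_num)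
    constructor <;> norm_num at hδ <;> nlinarith
  have hP₁ : IsStarProjection p₁ := ⟨hp₁', hp₁⟩
  have hP₂ : IsStarProjection p₂ := ⟨hp₂', hp₂⟩
  obtain ⟨v, hav, hvv, hp₂v⟩ :=
    exists_norm_sub_sq_le_and_star_mul_self_eq hP₁ hP₂ (by linarith) h1 h2
  refine ⟨v, (pow_lt_pow_iff_left₀ (norm_nonneg _) hε0.le two_ne_zero).mp (by linarith), hvv, ?_⟩
  have hv : ‖v‖ ≤ 1 := norm_le_one_of_isStarProjection_star_mul_self (hvv ▸ hP₁)
  have hav' : ‖a - v‖ ≤ 1 / 64 := by nlinarith [norm_nonneg (a - v)]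
  have ha : ‖a‖ ≤ 2 := by linarith [norm_le_norm_add_norm_sub' a v]
  have hr : IsStarProjection (v * star v) := .mul_star_self_of_star_mul_self (hvv ▸ hP₁)
  refine hr.eq_of_mul_eq_of_norm_sub_lt_one hP₂ (by rw [← mul_assoc, hp₂v]) ?_
  calc ‖p₂ - v * star v‖ ≤ ‖a * star a - p₂‖ + ‖a * star a - v * star v‖ := by
        rw [norm_sub_rev _ p₂]; exact norm_sub_le_norm_sub_add_norm_sub _ _ _
    _ < 1 := by
        nlinarith [norm_mul_star_sub_mul_star_le a v, norm_nonneg a, norm_nonneg v,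
          norm_nonneg (a - v)]

theorem stmt_6 {A : Type*} [CStarAlgebra A] {ε δ : ℝ} (hε0 : 0 < ε) (hε1 : ε < 1)
    (hδ0 : 0 < δ) (hδ : δ < 2 ^ (-16 : ℤ) * ε ^ 8) (a p₁ p₂ : A)
    (hp₁ : IsSelfAdjoint p₁) (hp₁' : IsIdempotentElem p₁)
    (hp₂ : IsSelfAdjoint p₂) (hp₂' : IsIdempotentElem p₂)
    (h1 : ‖star a * a - p₁‖ ≤ δ) (h2 : ‖a * star a - p₂‖ ≤ δ) :
    ∃ v : A, ‖a - v‖ < ε ∧ star v * v = p₁ ∧ v * star v = p₂ :=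
  stmt_6_general hε0 hε1 hδ a p₁ p₂ hp₁ hp₁' hp₂ hp₂' h1 h2
end
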